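/- arXiv:0712.1378 — 6 statements merged into one kernel-verified Lean document; each statement's English description precedes it below -/
import Mathlib

section
/- For all real numbers λ > 0 and t with 0 < t < λ, the integral (1/(4π)) ∫_{(√t−√λ)²}^{(√t+√λ)²} (log x / x) · (x − t + λ)/√(4λt − (x − t − λ)²) dx equals (1/2)·log(λ − t). -/
/-!
Write `P x = (x - a) (b - x)` with `a = (√t - √l)²`, `b = (√t + √l)²`, so that `ab = (l - t)²` and
the integrand is `log x · (x + √(ab)) / (x √P)`. Splitting `(x + √(ab)) / x = 1 + √(ab) / x`,
the substitution `x = ab / y`, an involution of `(a, b)` carrying `dx / (x √P)` to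
`dy / (√(ab) √P)`, turns the second part into `∫ (log (ab) - log y) / √P`. The `log y` terms cancel, and
`∫ₐᵇ dx / √P = π` by the antiderivative `arcsin ((2x - a - b) / (b - a))`.
-/

open Real MeasureTheory Set

section

variable {a b : ℝ}

theorem hasDerivAt_arcsin_affine {x : ℝ} (hx : x ∈ Ioo a b) :
    HasDerivAt (fun y => arcsin ((2 * y - a - b) / (b - a)))
      (√((x - a) * (b - x)))⁻¹ x := by
  obtain ⟨hax, hxb⟩ := hx
  have hba : 0 < b - a := by linarith
  set v := (2 * x - a - b) / (b - a)
  have hv1 : 1 - v ^ 2 = (2 / (b - a)) ^ 2 * ((x - a) * (b - x)) := by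
    simp only [v]; field_simp; ring
  have hv : v ∈ Ioo (-1) 1 := by
    constructor
    · rw [lt_div_iff₀ hba]; linarith
    · rw [div_lt_one hba]; linarith
  have hinner : HasDerivAt (fun y => (2 * y - a - b) / (b - a)) (2 / (b - a)) x := by
    simpa using (((hasDerivAt_id x).const_mul 2).sub_const a |>.sub_const b).div_const (b - a)
  refine ((hasDerivAt_arcsin hv.1.ne' hv.2.ne).comp x hinner).congr_deriv ?_
  rw [hv1, sqrt_mul (sq_nonneg _), sqrt_sq (by positivity)]
  field_simp

theorem integrableOn_inv_sqrt_mul_sub :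
    IntegrableOn (fun x => (√((x - a) * (b - x)))⁻¹) (Ioo a b) := by
  have hcont : ContinuousOn (fun y => arcsin ((2 * y - a - b) / (b - a))) (Icc a b) := by
    fun_prop
  exact (intervalIntegral.integrableOn_deriv_of_nonneg hcont
    (fun x hx => hasDerivAt_arcsin_affine hx) fun x _ => by positivity).mono_set
    Ioo_subset_Ioc_self

theorem integral_inv_sqrt_mul_sub (hab : a < b) :
    ∫ x in Ioo a b, (√((x - a) * (b - x)))⁻¹ = π := by
  have hcont : ContinuousOn (fun y => arcsin ((2 * y - a - b) / (b - a))) (Icc a b) := by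
    fun_prop
  rw [← integral_Ioc_eq_integral_Ioo, ← intervalIntegral.integral_of_le hab.le,
    intervalIntegral.integral_eq_sub_of_hasDerivAt_of_le hab.le hcont
      (fun x hx => hasDerivAt_arcsin_affine hx)
      ((intervalIntegrable_iff_integrableOn_Ioo_of_le hab.le).2
        integrableOn_inv_sqrt_mul_sub)]
  have hba : b - a ≠ 0 := by linarith
  have h1 : (2 * b - a - b) / (b - a) = 1 := by field_simp; ring
  have h2 : (2 * a - a - b) / (b - a) = -1 := by field_simp; ring
  simp only [h1, h2, arcsin_one, arcsin_neg_one]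
  ring

theorem integrableOn_div_sqrt_mul_sub {g : ℝ → ℝ} (hg : ContinuousOn g (Icc a b)) :
    IntegrableOn (fun x => g x / √((x - a) * (b - x))) (Ioo a b) := by
  simpa only [div_eq_mul_inv] using integrableOn_inv_sqrt_mul_sub.continuousOn_mul_of_subset
    hg isCompact_Icc measurableSet_Ioo Ioo_subset_Icc_self

theorem setIntegral_Ioo_eq_comp_mul_div (ha : 0 < a) (hab : a < b) (g : ℝ → ℝ) :
    ∫ x in Ioo a b, g x = ∫ y in Ioo a b, a * b / y ^ 2 * g (a * b / y) := by
  have hb : 0 < b := ha.trans hab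
  have hinv : Function.Involutive fun y : ℝ => a * b / y := fun y =>
    div_div_cancel₀ (mul_pos ha hb).ne'
  have hmaps : MapsTo (fun y => a * b / y) (Ioo a b) (Ioo a b) := by
    rintro y ⟨hay, hyb⟩
    have hy : 0 < y := ha.trans hay
    constructor
    · rw [lt_div_iff₀ hy]; nlinarith
    · rw [div_lt_iff₀ hy]; nlinarith
  have himage : (fun y => a * b / y) '' Ioo a b = Ioo a b :=
    hmaps.image_subset.antisymm fun x hx => ⟨_, hmaps hx, hinv x⟩
  have hderiv : ∀ y ∈ Ioo a b, HasDerivWithinAt (fun y => a * b / y) (-(a * b) / y ^ 2)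
      (Ioo a b) y := fun y hy => by
    have hy : y ≠ 0 := (ha.trans hy.1).ne'
    exact ((hasDerivAt_inv hy).const_mul (a * b)).hasDerivWithinAt.congr_deriv (by ring)
  conv_lhs => rw [← himage]
  rw [integral_image_eq_integral_abs_deriv_smul measurableSet_Ioo hderiv hinv.injective.injOn]
  refine setIntegral_congr_fun measurableSet_Ioo fun y _ => ?_
  rw [smul_eq_mul, abs_div, abs_neg, abs_of_pos (mul_pos ha hb), abs_of_nonneg (sq_nonneg y)]

theorem integral_log_div_mul_add_sqrt_div_sqrt (ha : 0 < a) (hab : a < b) :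
    ∫ x in a..b, log x / x * ((x + √(a * b)) / √((x - a) * (b - x))) = π * log (a * b) := by
  have hb : 0 < b := ha.trans hab
  set e := √(a * b) with he_def
  have he : 0 < e := sqrt_pos.2 (mul_pos ha hb)
  have hsqrt_comp : ∀ y ∈ Ioo a b,
      √((a * b / y - a) * (b - a * b / y)) = e / y * √((y - a) * (b - y)) := fun y hy => by
    have hy : 0 < y := ha.trans hy.1
    have h : (a * b / y - a) * (b - a * b / y) = (e / y) ^ 2 * ((y - a) * (b - y)) := by
      rw [div_pow, he_def, sq_sqrt (mul_pos ha hb).le]; field_simp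
    rw [h, sqrt_mul (sq_nonneg _), sqrt_sq (by positivity)]
  have hlog : ContinuousOn log (Icc a b) :=
    continuousOn_log.mono fun x hx => (ha.trans_le hx.1).ne'
  have hint_log := integrableOn_div_sqrt_mul_sub hlog
  have hint_sub := integrableOn_div_sqrt_mul_sub (g := fun x => log (a * b) - log x)
    (continuousOn_const.sub hlog)
  have hint_div := integrableOn_div_sqrt_mul_sub (g := fun x => e * (log x / x))
    (continuousOn_const.mul (hlog.div continuousOn_id fun x hx => (ha.trans_le hx.1).ne'))
  have hsubst : ∫ x in Ioo a b, e * (log x / x) / √((x - a) * (b - x)) =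
      ∫ y in Ioo a b, (log (a * b) - log y) / √((y - a) * (b - y)) := by
    rw [setIntegral_Ioo_eq_comp_mul_div ha hab]
    refine setIntegral_congr_fun measurableSet_Ioo fun y hy => ?_
    have hy0 : 0 < y := ha.trans hy.1
    rw [hsqrt_comp y hy, log_div (mul_pos ha hb).ne' hy0.ne']
    field_simp
  calc ∫ x in a..b, log x / x * ((x + e) / √((x - a) * (b - x)))
      = ∫ x in Ioo a b, (log x / √((x - a) * (b - x)) +
          e * (log x / x) / √((x - a) * (b - x))) := by
        rw [intervalIntegral.integral_of_le hab.le, integral_Ioc_eq_integral_Ioo]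
        refine setIntegral_congr_fun measurableSet_Ioo fun x hx => ?_
        have hx0 : x ≠ 0 := (ha.trans hx.1).ne'
        field_simp
    _ = ∫ x in Ioo a b, (log x / √((x - a) * (b - x)) +
          (log (a * b) - log x) / √((x - a) * (b - x))) := by
        rw [integral_add hint_log hint_div, hsubst, integral_add hint_log hint_sub]
    _ = ∫ x in Ioo a b, log (a * b) * (√((x - a) * (b - x)))⁻¹ := by
        congr 1 with x
        ring
    _ = π * log (a * b) := by
        rw [integral_const_mul, integral_inv_sqrt_mul_sub hab, mul_comm]

end

/-- For all real `l > 0` and `t` with `0 < t < l`, the integral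
`(1/(4π)) ∫_{(√t−√l)²}^{(√t+√l)²} (log x / x) · (x − t + l)/√(4lt − (x − t − l)²) dx`
equals `(1/2)·log(l − t)`. -/
theorem stmt0 (l t : ℝ) (hl : 0 < l) (ht : 0 < t) (htl : t < l) :
    (1 / (4 * π)) *
      ∫ x in ((Real.sqrt t - Real.sqrt l) ^ 2)..((Real.sqrt t + Real.sqrt l) ^ 2),
        (Real.log x / x) * ((x - t + l) / Real.sqrt (4 * l * t - (x - t - l) ^ 2))
    = (1 / 2) * Real.log (l - t) := by
  obtain ⟨s, hs, rfl⟩ : ∃ s > 0, s ^ 2 = t := ⟨√t, sqrt_pos.2 ht, sq_sqrt ht.le⟩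
  obtain ⟨r, hr, rfl⟩ : ∃ r > 0, r ^ 2 = l := ⟨√l, sqrt_pos.2 hl, sq_sqrt hl.le⟩
  have hsr : s < r := by nlinarith
  have hprod : √((s - r) ^ 2 * (s + r) ^ 2) = r ^ 2 - s ^ 2 := by
    rw [← mul_pow, sqrt_sq_eq_abs, abs_of_nonpos (by nlinarith)]; ring
  have h := integral_log_div_mul_add_sqrt_div_sqrt (a := (s - r) ^ 2) (b := (s + r) ^ 2)
    (by nlinarith) (by nlinarith)
  rw [hprod, ← mul_pow, show (s - r) * (s + r) = -(r ^ 2 - s ^ 2) by ring, neg_sq,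
    log_pow] at h
  rw [sqrt_sq hs.le, sqrt_sq hr.le]
  have hintegrand : ∀ x,
      log x / x * ((x - s ^ 2 + r ^ 2) / √(4 * r ^ 2 * s ^ 2 - (x - s ^ 2 - r ^ 2) ^ 2)) =
        log x / x * ((x + (r ^ 2 - s ^ 2)) / √((x - (s - r) ^ 2) * ((s + r) ^ 2 - x))) :=
    fun x => by ring_nf
  simp only [hintegrand, h]
  field_simp
  ring
end

section
/- Let μ be a finite Borel measure on ℝ whose support is a compact subset of (0,∞), and let t = μ(ℝ). Then lim_{c→∞} [ t·log c − ∫₀^c ( ∫ 1/(s+x) dμ(x) ) ds ] = ∫ log x dμ(x). -/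
open Real MeasureTheory Filter Set

/-!
By Fubini and `∫₀^c ds/(s+x) = log (c+x) - log x`, the bracket equals
`∫ log x dμ - ∫ (log (c+x) - log c) dμ`. On the support `0 ≤ log (c+x) - log c ≤ x/c`, and `x` is
bounded there, so the second integral is `O(1/c)`.
-/

lemma IsCompact.exists_Icc_of_subset_Ioi {K : Set ℝ} {r : ℝ} (hK : IsCompact K)
    (hKr : K ⊆ Ioi r) : ∃ a b, r < a ∧ K ⊆ Icc a b := by
  rcases K.eq_empty_or_nonempty with rfl | hne
  · exact ⟨r + 1, r + 1, by linarith, empty_subset _⟩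
  · exact ⟨sInf K, sSup K, hKr (hK.sInf_mem hne),
      fun x hx => ⟨csInf_le hK.bddBelow hx, le_csSup hK.bddAbove hx⟩⟩

lemma integral_one_div_add_right {x c : ℝ} (hx : 0 < x) (hc : 0 ≤ c) :
    ∫ s in (0 : ℝ)..c, 1 / (s + x) = log (c + x) - log x := by
  rw [intervalIntegral.integral_comp_add_right (fun u => 1 / u) x, zero_add,
    integral_one_div_of_pos hx (by linarith), log_div (by linarith) hx.ne']

lemma log_add_sub_log_mem_Icc {c x : ℝ} (hc : 0 < c) (hx : 0 ≤ x) :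
    log (c + x) - log c ∈ Icc 0 (x / c) := by
  have hsplit : log (c + x) - log c = log (1 + x / c) := by
    rw [← log_div (by linarith) hc.ne', add_div, div_self hc.ne']
  rw [hsplit]
  exact ⟨log_nonneg (by simp only [le_add_iff_nonneg_right]; positivity),
    (log_le_sub_one_of_pos (by positivity)).trans_eq (by ring)⟩

section FiniteMeasure

variable {μ : Measure ℝ} [IsFiniteMeasure μ] {a b : ℝ}

lemma integrable_log_const_add_of_ae_mem_Icc {c : ℝ} (hca : 0 < c + a)
    (hμ : ∀ᵐ x ∂μ, x ∈ Icc a b) : Integrable (fun x => log (c + x)) μ := by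
  refine Integrable.of_bound
    (measurable_log.comp (measurable_const_add c)).aestronglyMeasurable (max |log (c + a)| |log (c + b)|) ?_
  filter_upwards [hμ] with x hx
  rw [norm_eq_abs]
  exact abs_le_max_abs_abs (log_le_log hca (by linarith [hx.1]))
    (log_le_log (by linarith [hx.1]) (by linarith [hx.2]))

lemma intervalIntegral_integral_one_div_add {c : ℝ} (ha : 0 < a) (hc : 0 ≤ c)
    (hμ : ∀ᵐ x ∂μ, a ≤ x) :
    ∫ s in (0 : ℝ)..c, ∫ x, 1 / (s + x) ∂μ = ∫ x, (log (c + x) - log x) ∂μ := by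
  set ν := volume.restrict (Ioc (0 : ℝ) c)
  have hν : ∀ᵐ s ∂ν, s ∈ Ioc 0 c := ae_restrict_mem measurableSet_Ioc
  have hint : Integrable (fun p : ℝ × ℝ => 1 / (p.1 + p.2)) (ν.prod μ) := by
    refine Integrable.of_bound
      ((measurable_fst.add measurable_snd).const_div 1).aestronglyMeasurable (1 / a) ?_
    filter_upwards [Measure.quasiMeasurePreserving_fst.ae hν,
      Measure.quasiMeasurePreserving_snd.ae hμ] with p hp1 hp2
    have hpa : a ≤ p.1 + p.2 := by linarith [hp1.1]
    rw [norm_eq_abs, abs_of_pos (one_div_pos.mpr (ha.trans_le hpa))]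
    exact one_div_le_one_div_of_le ha hpa
  rw [intervalIntegral.integral_of_le hc, integral_integral_swap hint]
  refine integral_congr_ae ?_
  filter_upwards [hμ] with x hx
  rw [← intervalIntegral.integral_of_le hc, integral_one_div_add_right (ha.trans_le hx) hc]

lemma tendsto_integral_log_add_sub_log (hμ : ∀ᵐ x ∂μ, x ∈ Icc 0 b) :
    Tendsto (fun c => ∫ x, (log (c + x) - log c) ∂μ) atTop (nhds 0) := by
  refine squeeze_zero_norm' (a := fun c => b * μ.real univ * c⁻¹) ?_
    (by simpa using tendsto_inv_atTop_zero.const_mul (b * μ.real univ))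
  filter_upwards [eventually_gt_atTop 0] with c hc
  calc ‖∫ x, (log (c + x) - log c) ∂μ‖ ≤ b / c * μ.real univ := by
        refine norm_integral_le_of_norm_le_const ?_
        filter_upwards [hμ] with x hx
        obtain ⟨hnonneg, hle⟩ := log_add_sub_log_mem_Icc hc hx.1
        rw [norm_eq_abs, abs_of_nonneg hnonneg]
        exact hle.trans (by gcongr; exact hx.2)
    _ = b * μ.real univ * c⁻¹ := by ring

end FiniteMeasure

/-- Let `μ` be a finite Borel measure on `ℝ` whose support is a compact subset `K` of `(0,∞)`,
and let `t = μ(ℝ)`.  Then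
`lim_{c→∞} [ t·log c − ∫₀^c ( ∫ 1/(s+x) dμ(x) ) ds ] = ∫ log x dμ(x)`. -/
theorem stmt4 (μ : Measure ℝ) [IsFiniteMeasure μ]
    (K : Set ℝ) (hK : IsCompact K) (hKpos : K ⊆ Set.Ioi 0) (hμK : μ Kᶜ = 0) :
    Tendsto
      (fun c : ℝ =>
        (μ Set.univ).toReal * Real.log c - ∫ s in (0 : ℝ)..c, ∫ x, 1 / (s + x) ∂μ)
      atTop (nhds (∫ x, Real.log x ∂μ)) := by
  obtain ⟨a, b, ha, hKab⟩ := hK.exists_Icc_of_subset_Ioi hKpos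
  have hμ : ∀ᵐ x ∂μ, x ∈ Icc a b :=
    (show ∀ᵐ x ∂μ, x ∈ K from mem_ae_iff.mpr hμK).mono hKab
  have hlog : Integrable log μ := by
    simpa using integrable_log_const_add_of_ae_mem_Icc (c := 0) (by simpa) hμ
  have hrewrite : ∀ᶠ c in atTop,
      ∫ x, log x ∂μ - ∫ x, (log (c + x) - log c) ∂μ
        = (μ univ).toReal * log c - ∫ s in (0 : ℝ)..c, ∫ x, 1 / (s + x) ∂μ := by
    filter_upwards [eventually_ge_atTop 0] with c hc
    have hlog_add := integrable_log_const_add_of_ae_mem_Icc (by linarith) hμ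
    rw [intervalIntegral_integral_one_div_add ha hc (hμ.mono fun x hx => hx.1),
      integral_sub hlog_add hlog, integral_sub hlog_add (integrable_const _), integral_const,
      smul_eq_mul, measureReal_def]
    ring
  simpa using (tendsto_const_nhds.sub (tendsto_integral_log_add_sub_log
    (hμ.mono fun x hx => ⟨ha.le.trans hx.1, hx.2⟩))).congr' hrewrite
end

section
/- Let μ be a finite Borel measure on ℝ whose support is a compact subset of (0,∞), let t = μ(ℝ), and define ψ(z) = ∫ z·x/(1 − z·x) dμ(x) for z ≤ 0. Then for every A ∈ ℝ the improper integral ∫_{−∞}^A ψ(−e^v) dv converges absolutely, and ∫ log x dμ(x) = lim_{A→∞} [ −t·A − ∫_{−∞}^A ψ(−e^v) dv ]. -/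
open Real MeasureTheory Filter Topology Set

/-!
For `x ≥ 0` the integrand `v ↦ -eᵛx / (1 + eᵛx)` is the derivative of `v ↦ -log (1 + eᵛx)`, which
vanishes at `-∞`, so `∫_{-∞}^A ψ(-eᵛ) dv = -∫ log (1 + e^A x) dμ(x)` by Fubini (the integrand is
dominated by `eᵛ · sup (supp μ)`). Since `log (1 + e^A x) = A + log (e^{-A} + x)`, the expression
in the limit equals `∫ log (e^{-A} + x) dμ(x)`, which tends to `∫ log x dμ(x)` by dominated
convergence, `supp μ` being bounded away from `0` and `∞`.
-/

noncomputable def psi (μ : Measure ℝ) (z : ℝ) : ℝ :=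
  ∫ x, z * x / (1 - z * x) ∂μ

lemma neg_exp_mul_div_one_sub (v x : ℝ) :
    -exp v * x / (1 - -exp v * x) = -(exp v * x / (1 + exp v * x)) := by
  ring

lemma abs_neg_exp_mul_div_one_sub_le {x : ℝ} (hx : 0 ≤ x) (v : ℝ) :
    |-exp v * x / (1 - -exp v * x)| ≤ exp v * x := by
  rw [neg_exp_mul_div_one_sub, abs_neg, abs_of_nonneg (by positivity)]
  exact div_le_self (by positivity) (by nlinarith [exp_pos v])

lemma hasDerivAt_neg_log_one_add_exp_mul {x : ℝ} (hx : 0 ≤ x) (v : ℝ) :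
    HasDerivAt (fun v => -log (1 + exp v * x)) (-exp v * x / (1 - -exp v * x)) v := by
  rw [neg_exp_mul_div_one_sub]
  exact ((((hasDerivAt_exp v).mul_const x).const_add 1).log (by positivity)).neg

lemma integral_Iic_neg_exp_mul_div_one_sub {x : ℝ} (hx : 0 ≤ x) (A : ℝ) :
    ∫ v in Iic A, -exp v * x / (1 - -exp v * x) = -log (1 + exp A * x) := by
  have hint : IntegrableOn (fun v => -exp v * x / (1 - -exp v * x)) (Iic A) := by
    refine Integrable.mono' ((integrableOn_exp_Iic A).mul_const x)
      (by fun_prop : Measurable _).aestronglyMeasurable ?_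
    exact .of_forall fun v => abs_neg_exp_mul_div_one_sub_le hx v
  have hlim : Tendsto (fun v => -log (1 + exp v * x)) atBot (𝓝 0) := by
    have h := ((tendsto_exp_atBot.mul_const x).const_add 1).log (by simp : (1 : ℝ) + 0 * x ≠ 0)
    simpa using h.neg
  rw [integral_Iic_of_hasDerivAt_of_tendsto'
    (fun v _ => hasDerivAt_neg_log_one_add_exp_mul hx v) hint hlim, sub_zero]

lemma log_one_add_exp_mul {x : ℝ} (hx : 0 ≤ x) (A : ℝ) :
    log (1 + exp A * x) = A + log (exp (-A) + x) := by
  rw [show 1 + exp A * x = exp A * (exp (-A) + x) by rw [mul_add, ← exp_add]; simp,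
    log_mul (exp_ne_zero A) (by positivity : 0 < exp (-A) + x).ne', log_exp]

lemma IsCompact.exists_subset_Icc_of_subset_Ioi {K : Set ℝ} (hK : IsCompact K)
    (hKpos : K ⊆ Ioi 0) : ∃ a b, 0 < a ∧ K ⊆ Icc a b := by
  rcases K.eq_empty_or_nonempty with rfl | hne
  · exact ⟨1, 1, one_pos, empty_subset _⟩
  obtain ⟨a, haK, ha⟩ := hK.exists_isLeast hne
  obtain ⟨b, -, hb⟩ := hK.exists_isGreatest hne
  exact ⟨a, b, hKpos haK, fun x hx => ⟨ha hx, hb hx⟩⟩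

section

variable {μ : Measure ℝ} [IsFiniteMeasure μ] {b : ℝ}

lemma integrable_neg_exp_mul_div_one_sub_prod (hμ : ∀ᵐ x ∂μ, x ∈ Icc 0 b) (A : ℝ) :
    Integrable (fun p : ℝ × ℝ => -exp p.1 * p.2 / (1 - -exp p.1 * p.2))
      ((volume.restrict (Iic A)).prod μ) := by
  refine Integrable.mono' ((integrableOn_exp_Iic A).mul_prod (integrable_const b))
    (by fun_prop : Measurable _).aestronglyMeasurable ?_
  filter_upwards [Measure.quasiMeasurePreserving_snd.ae hμ] with p ⟨hp0, hpb⟩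
  calc |-exp p.1 * p.2 / (1 - -exp p.1 * p.2)| ≤ exp p.1 * p.2 :=
        abs_neg_exp_mul_div_one_sub_le hp0 p.1
    _ ≤ exp p.1 * b := by gcongr

lemma integrableOn_psi_neg_exp (hμ : ∀ᵐ x ∂μ, x ∈ Icc 0 b) (A : ℝ) :
    IntegrableOn (fun v => psi μ (-exp v)) (Iic A) :=
  (integrable_neg_exp_mul_div_one_sub_prod hμ A).integral_prod_left

lemma integrable_log_one_add_exp_mul (hμ : ∀ᵐ x ∂μ, x ∈ Icc 0 b) (A : ℝ) :
    Integrable (fun x => log (1 + exp A * x)) μ := by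
  refine (integrable_neg_exp_mul_div_one_sub_prod hμ A).integral_prod_right.neg.congr ?_
  filter_upwards [hμ] with x hx
  rw [Pi.neg_apply, integral_Iic_neg_exp_mul_div_one_sub hx.1, neg_neg]

lemma integral_Iic_psi_neg_exp (hμ : ∀ᵐ x ∂μ, x ∈ Icc 0 b) (A : ℝ) :
    ∫ v in Iic A, psi μ (-exp v) = -∫ x, log (1 + exp A * x) ∂μ := by
  rw [← integral_neg]
  refine (integral_integral_swap (integrable_neg_exp_mul_div_one_sub_prod hμ A)).trans
    (integral_congr_ae ?_)
  filter_upwards [hμ] with x hx using integral_Iic_neg_exp_mul_div_one_sub hx.1 A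

lemma neg_mul_sub_integral_Iic_psi_neg_exp (hμ : ∀ᵐ x ∂μ, x ∈ Icc 0 b) (A : ℝ) :
    -(μ univ).toReal * A - ∫ v in Iic A, psi μ (-exp v) = ∫ x, log (exp (-A) + x) ∂μ := by
  have hshift : ∫ x, log (exp (-A) + x) ∂μ = ∫ x, (log (1 + exp A * x) - A) ∂μ := by
    refine integral_congr_ae ?_
    filter_upwards [hμ] with x hx
    rw [log_one_add_exp_mul hx.1]
    ring
  rw [integral_Iic_psi_neg_exp hμ A, hshift,
    integral_sub (integrable_log_one_add_exp_mul hμ A) (integrable_const A), integral_const,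
    smul_eq_mul, measureReal_def]
  ring

lemma tendsto_integral_log_exp_neg_add {a : ℝ} (ha : 0 < a) (hμ : ∀ᵐ x ∂μ, x ∈ Icc a b) :
    Tendsto (fun A => ∫ x, log (exp (-A) + x) ∂μ) atTop (𝓝 (∫ x, log x ∂μ)) := by
  refine tendsto_integral_filter_of_dominated_convergence (fun _ => max |log a| |log (1 + b)|)
    (.of_forall fun A => (by fun_prop : Measurable _).aestronglyMeasurable) ?_
    (integrable_const _) ?_
  · filter_upwards [eventually_ge_atTop 0] with A hA
    filter_upwards [hμ] with x ⟨hax, hxb⟩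
    have hexp : exp (-A) ≤ 1 := exp_le_one_iff.2 (by linarith)
    refine abs_le_max_abs_abs (log_le_log ha (by linarith [exp_pos (-A)])) ?_
    exact log_le_log (by linarith [exp_pos (-A)]) (by linarith)
  · filter_upwards [hμ] with x hx
    have h := tendsto_exp_neg_atTop_nhds_zero.add_const x
    rw [zero_add] at h
    exact h.log (by linarith [hx.1])

end

/-- Let `μ` be a finite Borel measure on `ℝ` whose support is a compact subset `K` of `(0,∞)`,
let `t = μ(ℝ)`, and let `ψ(z) = ∫ z·x/(1 − z·x) dμ(x)` for `z ≤ 0`.  Then for every `A ∈ ℝ`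
the improper integral `∫_{−∞}^A ψ(−e^v) dv` converges absolutely, and
`∫ log x dμ(x) = lim_{A→∞} [ −t·A − ∫_{−∞}^A ψ(−e^v) dv ]`. -/
theorem stmt5 (μ : Measure ℝ) [IsFiniteMeasure μ]
    (K : Set ℝ) (hK : IsCompact K) (hKpos : K ⊆ Set.Ioi 0) (hμK : μ Kᶜ = 0) :
    (∀ A : ℝ,
      IntegrableOn
        (fun v : ℝ => ∫ x, (-Real.exp v) * x / (1 - (-Real.exp v) * x) ∂μ) (Set.Iic A)) ∧
    Tendsto
      (fun A : ℝ =>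
        -(μ Set.univ).toReal * A -
          ∫ v in Set.Iic A, ∫ x, (-Real.exp v) * x / (1 - (-Real.exp v) * x) ∂μ)
      atTop (nhds (∫ x, Real.log x ∂μ)) := by
  obtain ⟨a, b, ha, hKab⟩ := hK.exists_subset_Icc_of_subset_Ioi hKpos
  have hμab : ∀ᵐ x ∂μ, x ∈ Icc a b :=
    ae_iff.2 (measure_mono_null (fun x hx => mt (@hKab x) hx) hμK)
  have hμ0b : ∀ᵐ x ∂μ, x ∈ Icc 0 b := hμab.mono fun x hx => ⟨ha.le.trans hx.1, hx.2⟩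
  refine ⟨integrableOn_psi_neg_exp hμ0b, ?_⟩
  exact (tendsto_integral_log_exp_neg_add ha hμab).congr fun A =>
    (neg_mul_sub_integral_Iic_psi_neg_exp hμ0b A).symm
end

section
/- Let μ be a nonzero finite Borel measure on ℝ whose support is a compact subset of (0,∞), let t = μ(ℝ) > 0, and define ψ(z) = ∫ z·x/(1 − z·x) dμ(x) for z < 0. Then ψ is a continuous, strictly increasing bijection from (−∞, 0) onto (−t, 0); in particular ψ(z) → 0 as z → 0⁻ and ψ(z) → −t as z → −∞. -/
/-!
For each `x > 0` the kernel `z ↦ z x / (1 - z x)` is continuous and strictly increasing on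
`(-∞, 0)`, bounded by `1` in absolute value, and tends to `-1` at `-∞` and to `0` at `0`.
Dominated convergence with the constant bound `1` transfers continuity and both limits to `ψ`,
and integrating the pointwise strict inequality against the nonzero measure `μ` (carried by
`(0, ∞)`) gives strict monotonicity. A continuous strictly increasing function on `(-∞, 0)` is a
bijection onto the open interval between its two limits.
-/

open MeasureTheory Filter Set Topology

lemma StrictMonoOn.bijOn_Iio_Ioo_of_tendsto {α β : Type*} [ConditionallyCompleteLinearOrder α]
    [TopologicalSpace α] [OrderTopology α] [DenselyOrdered α] [NoMinOrder α]
    [LinearOrder β] [TopologicalSpace β] [OrderClosedTopology β] {f : α → β} {b : α} {c d : β}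
    (hmono : StrictMonoOn f (Iio b)) (hcont : ContinuousOn f (Iio b))
    (hbot : Tendsto f atBot (𝓝 c)) (hb : Tendsto f (𝓝[<] b) (𝓝 d)) :
    BijOn f (Iio b) (Ioo c d) := by
  refine ⟨fun z hz => ⟨?_, ?_⟩, hmono.injOn,
    isPreconnected_Iio.intermediate_value_Ioo (l₂ := 𝓝[<] b)
      (le_principal_iff.2 (Iio_mem_atBot b)) inf_le_right hcont hbot hb⟩
  · obtain ⟨w, hw⟩ := exists_lt z
    refine (le_of_tendsto hbot ?_).trans_lt (hmono (hw.trans hz) hz hw)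
    filter_upwards [eventually_le_atBot w] with y hy
    exact hmono.monotoneOn (hy.trans_lt (hw.trans hz)) (hw.trans hz) hy
  · obtain ⟨w, hzw, hwb⟩ := exists_between hz
    refine (hmono hz hwb hzw).trans_le (ge_of_tendsto hb ?_)
    filter_upwards [Ioo_mem_nhdsLT hwb] with y hy
    exact hmono.monotoneOn hwb hy.2 hy.1.le

section Kernel

variable {x z : ℝ}

lemma one_sub_mul_pos_of_neg_of_pos (hz : z < 0) (hx : 0 < x) : 0 < 1 - z * x := by
  nlinarith

lemma norm_mul_div_one_sub_mul_le_one (hz : z < 0) (hx : 0 < x) :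
    ‖z * x / (1 - z * x)‖ ≤ 1 := by
  have hd := one_sub_mul_pos_of_neg_of_pos hz hx
  rw [Real.norm_eq_abs, abs_div, abs_of_pos hd, div_le_one hd, abs_of_neg (by nlinarith)]
  linarith

lemma strictMonoOn_mul_div_one_sub_mul (hx : 0 < x) :
    StrictMonoOn (fun z => z * x / (1 - z * x)) (Iio 0) := by
  intro z₁ hz₁ z₂ hz₂ h
  have hd₁ := one_sub_mul_pos_of_neg_of_pos hz₁ hx
  have hd₂ := one_sub_mul_pos_of_neg_of_pos hz₂ hx
  simp only
  rw [div_lt_div_iff₀ hd₁ hd₂]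
  nlinarith [mul_pos (sub_pos.2 h) hx]

lemma continuousAt_mul_div_one_sub_mul (hz : z ≤ 0) (hx : 0 < x) :
    ContinuousAt (fun z => z * x / (1 - z * x)) z :=
  (continuousAt_id.mul continuousAt_const).div
    (continuousAt_const.sub (continuousAt_id.mul continuousAt_const)) (by nlinarith)

lemma tendsto_mul_div_one_sub_mul_atBot (hx : 0 < x) :
    Tendsto (fun z => z * x / (1 - z * x)) atBot (𝓝 (-1)) := by
  have h : Tendsto (fun z : ℝ => x / (z⁻¹ - x)) atBot (𝓝 (x / (0 - x))) :=
    tendsto_const_nhds.div (tendsto_inv_atBot_zero.sub_const x) (by linarith)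
  rw [zero_sub, div_neg, div_self hx.ne'] at h
  refine h.congr' ?_
  filter_upwards [eventually_lt_atBot 0] with z hz
  field_simp [hz.ne]

end Kernel

section Measure

variable {α : Type*} [MeasurableSpace α] {μ : Measure α}

lemma integral_pos_of_ae_pos (hμ : μ ≠ 0) {f : α → ℝ} (hf : Integrable f μ)
    (hpos : ∀ᵐ a ∂μ, 0 < f a) : 0 < ∫ a, f a ∂μ := by
  rw [integral_pos_iff_support_of_nonneg_ae (hpos.mono fun _ => le_of_lt) hf]
  have hsupp : Function.support f =ᵐ[μ] univ :=
    ae_eq_univ.2 (ae_iff.1 (hpos.mono fun _ h => h.ne'))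
  rw [measure_congr hsupp]
  exact Measure.measure_univ_pos.2 hμ

end Measure

section PsiFunction

variable {μ : Measure ℝ} [IsFiniteMeasure μ]

lemma integrable_mul_div_one_sub_mul (hμ : ∀ᵐ x ∂μ, 0 < x) {z : ℝ} (hz : z < 0) :
    Integrable (fun x => z * x / (1 - z * x)) μ :=
  (integrable_const (1 : ℝ)).mono' (by fun_prop : Measurable _).aestronglyMeasurable
    (hμ.mono fun _ hx => norm_mul_div_one_sub_mul_le_one hz hx)

lemma tendsto_integral_mul_div_one_sub_mul (hμ : ∀ᵐ x ∂μ, 0 < x) {l : Filter ℝ}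
    [l.IsCountablyGenerated] (hl : ∀ᶠ z in l, z < 0) {g : ℝ → ℝ}
    (hg : ∀ᵐ x ∂μ, Tendsto (fun z => z * x / (1 - z * x)) l (𝓝 (g x))) :
    Tendsto (fun z => ∫ x, z * x / (1 - z * x) ∂μ) l (𝓝 (∫ x, g x ∂μ)) :=
  tendsto_integral_filter_of_dominated_convergence (fun _ => 1)
    (Eventually.of_forall fun _ => (by fun_prop : Measurable _).aestronglyMeasurable)
    (hl.mono fun _ hz => hμ.mono fun _ hx => norm_mul_div_one_sub_mul_le_one hz hx)
    (integrable_const 1) hg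

lemma continuousOn_integral_mul_div_one_sub_mul (hμ : ∀ᵐ x ∂μ, 0 < x) :
    ContinuousOn (fun z => ∫ x, z * x / (1 - z * x) ∂μ) (Iio 0) := fun _ hz =>
  ContinuousAt.continuousWithinAt <| tendsto_integral_mul_div_one_sub_mul hμ (Iio_mem_nhds hz)
    (hμ.mono fun _ hx => continuousAt_mul_div_one_sub_mul (le_of_lt hz) hx)

lemma tendsto_integral_mul_div_one_sub_mul_nhdsLT_zero (hμ : ∀ᵐ x ∂μ, 0 < x) :
    Tendsto (fun z => ∫ x, z * x / (1 - z * x) ∂μ) (𝓝[<] 0) (𝓝 0) := by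
  simpa using tendsto_integral_mul_div_one_sub_mul hμ (l := 𝓝[<] 0) eventually_mem_nhdsWithin
    (hμ.mono fun _ hx => (continuousAt_mul_div_one_sub_mul le_rfl hx).tendsto.mono_left
      nhdsWithin_le_nhds)

lemma tendsto_integral_mul_div_one_sub_mul_atBot (hμ : ∀ᵐ x ∂μ, 0 < x) :
    Tendsto (fun z => ∫ x, z * x / (1 - z * x) ∂μ) atBot (𝓝 (-μ.real univ)) := by
  simpa using tendsto_integral_mul_div_one_sub_mul hμ (eventually_lt_atBot 0)
    (hμ.mono fun _ hx => tendsto_mul_div_one_sub_mul_atBot hx)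

lemma strictMonoOn_integral_mul_div_one_sub_mul (hμ₀ : μ ≠ 0) (hμ : ∀ᵐ x ∂μ, 0 < x) :
    StrictMonoOn (fun z => ∫ x, z * x / (1 - z * x) ∂μ) (Iio 0) := by
  intro z₁ hz₁ z₂ hz₂ h
  have hi₁ := integrable_mul_div_one_sub_mul hμ hz₁
  have hi₂ := integrable_mul_div_one_sub_mul hμ hz₂
  have hdiff := integral_pos_of_ae_pos hμ₀ (f := fun x => _ - _) (hi₂.sub hi₁)
    (hμ.mono fun _ hx => sub_pos.2 (strictMonoOn_mul_div_one_sub_mul hx hz₁ hz₂ h))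
  rw [integral_sub hi₂ hi₁] at hdiff
  exact sub_pos.1 hdiff

end PsiFunction

theorem stmt6_general (μ : Measure ℝ) [IsFiniteMeasure μ] (hμ : μ ≠ 0)
    (K : Set ℝ) (hKpos : K ⊆ Set.Ioi 0) (hμK : μ Kᶜ = 0) :
    ContinuousOn (fun z : ℝ => ∫ x, z * x / (1 - z * x) ∂μ) (Set.Iio 0) ∧
    StrictMonoOn (fun z : ℝ => ∫ x, z * x / (1 - z * x) ∂μ) (Set.Iio 0) ∧
    Set.BijOn (fun z : ℝ => ∫ x, z * x / (1 - z * x) ∂μ) (Set.Iio 0)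
      (Set.Ioo (-(μ Set.univ).toReal) 0) ∧
    Tendsto (fun z : ℝ => ∫ x, z * x / (1 - z * x) ∂μ)
      (nhdsWithin 0 (Set.Iio 0)) (nhds 0) ∧
    Tendsto (fun z : ℝ => ∫ x, z * x / (1 - z * x) ∂μ)
      atBot (nhds (-(μ Set.univ).toReal)) := by
  have hpos : ∀ᵐ x ∂μ, 0 < x := mem_of_superset (mem_ae_iff.2 hμK) hKpos
  have hcont := continuousOn_integral_mul_div_one_sub_mul hpos
  have hmono := strictMonoOn_integral_mul_div_one_sub_mul hμ hpos
  have hzero := tendsto_integral_mul_div_one_sub_mul_nhdsLT_zero hpos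
  have hbot := tendsto_integral_mul_div_one_sub_mul_atBot hpos
  exact ⟨hcont, hmono, hmono.bijOn_Iio_Ioo_of_tendsto hcont hbot hzero, hzero, hbot⟩

/-- Let `μ` be a nonzero finite Borel measure on `ℝ` whose support is a compact subset `K`
of `(0,∞)`, let `t = μ(ℝ) > 0`, and let `ψ(z) = ∫ z·x/(1 − z·x) dμ(x)` for `z < 0`.  Then
`ψ` is a continuous, strictly increasing bijection from `(−∞, 0)` onto `(−t, 0)`; in
particular `ψ(z) → 0` as `z → 0⁻` and `ψ(z) → −t` as `z → −∞`. -/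
theorem stmt6 (μ : Measure ℝ) [IsFiniteMeasure μ] (hμ : μ ≠ 0)
    (K : Set ℝ) (hK : IsCompact K) (hKpos : K ⊆ Set.Ioi 0) (hμK : μ Kᶜ = 0) :
    ContinuousOn (fun z : ℝ => ∫ x, z * x / (1 - z * x) ∂μ) (Set.Iio 0) ∧
    StrictMonoOn (fun z : ℝ => ∫ x, z * x / (1 - z * x) ∂μ) (Set.Iio 0) ∧
    Set.BijOn (fun z : ℝ => ∫ x, z * x / (1 - z * x) ∂μ) (Set.Iio 0)
      (Set.Ioo (-(μ Set.univ).toReal) 0) ∧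
    Tendsto (fun z : ℝ => ∫ x, z * x / (1 - z * x) ∂μ)
      (nhdsWithin 0 (Set.Iio 0)) (nhds 0) ∧
    Tendsto (fun z : ℝ => ∫ x, z * x / (1 - z * x) ∂μ)
      atBot (nhds (-(μ Set.univ).toReal)) :=
  stmt6_general μ hμ K hKpos hμK
end

section
/- For every real λ > 0, ∫_{(1−√λ)²}^{(1+√λ)²} √(4λ − (x−1−λ)²)/(2πx) dx = min(1, λ). -/
/-!
With `a = 1 + l` and `b = 2√l` the density is `√(b² - (x - a)²) / (2πx)` on `[a - b, a + b]`.
For `0 < b ≤ a` it has the elementary antiderivative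
`(√(b² - (x - a)²) + a arcsin((x - a)/b) - c arcsin((b² + a(x - a))/(bx))) / (2π)`,
`c = √(a² - b²)`, whose increment over `[a - b, a + b]` is `(a - c)/2`; integrability comes for
free because the integrand is a nonnegative derivative. Finally `c = |1 - l|` and
`(1 + l - |1 - l|)/2 = min 1 l`.
-/

open Real MeasureTheory Set intervalIntegral

section SemicircleDivX

variable {a b x : ℝ}

lemma hasDerivAt_sqrt_add_mul_arcsin (hb : 0 < b) (hx : x ∈ Ioo (a - b) (a + b)) :
    HasDerivAt (fun y => √(b ^ 2 - (y - a) ^ 2) + a * arcsin ((y - a) / b))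
      ((2 * a - x) / √(b ^ 2 - (x - a) ^ 2)) x := by
  obtain ⟨hx₁, hx₂⟩ := hx
  have hpos : 0 < b ^ 2 - (x - a) ^ 2 := by nlinarith
  have hS : 0 < √(b ^ 2 - (x - a) ^ 2) := sqrt_pos.2 hpos
  have hlt : (x - a) / b < 1 := (div_lt_one hb).2 (by linarith)
  have hgt : -1 < (x - a) / b := by rw [lt_div_iff₀ hb]; linarith
  have hsqrt : √(1 - ((x - a) / b) ^ 2) = √(b ^ 2 - (x - a) ^ 2) / b := by
    rw [show 1 - ((x - a) / b) ^ 2 = (b ^ 2 - (x - a) ^ 2) / b ^ 2 by field_simp,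
      sqrt_div hpos.le, sqrt_sq hb.le]
  have hroot := ((hasDerivAt_id x).sub_const a).pow 2 |>.const_sub (b ^ 2) |>.sqrt hpos.ne'
  have harcsin := (hasDerivAt_arcsin hgt.ne' hlt.ne).comp x
    (((hasDerivAt_id x).sub_const a).div_const b) |>.const_mul a
  refine (hroot.add harcsin).congr_deriv ?_
  simp only [id, Pi.pow_apply, hsqrt]
  field_simp
  norm_num
  ring

lemma hasDerivAt_sqrt_mul_arcsin (hb : 0 < b) (hba : b ≤ a) (hx : x ∈ Ioo (a - b) (a + b)) :
    HasDerivAt (fun y => √(a ^ 2 - b ^ 2) * arcsin ((b ^ 2 + a * (y - a)) / (b * y)))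
      ((a ^ 2 - b ^ 2) / (x * √(b ^ 2 - (x - a) ^ 2))) x := by
  rcases hba.lt_or_eq with hba | rfl
  swap
  · simpa using hasDerivAt_const x (0 : ℝ)
  obtain ⟨hx₁, hx₂⟩ := hx
  have hx₀ : 0 < x := by linarith
  have hbx : 0 < b * x := by positivity
  have hpos : 0 < b ^ 2 - (x - a) ^ 2 := by nlinarith
  have hc : 0 < a ^ 2 - b ^ 2 := by nlinarith
  have hlt : (b ^ 2 + a * (x - a)) / (b * x) < 1 := by rw [div_lt_one hbx]; nlinarith
  have hgt : -1 < (b ^ 2 + a * (x - a)) / (b * x) := by rw [lt_div_iff₀ hbx]; nlinarith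
  have hsqrt : √(1 - ((b ^ 2 + a * (x - a)) / (b * x)) ^ 2)
      = √(a ^ 2 - b ^ 2) * √(b ^ 2 - (x - a) ^ 2) / (b * x) := by
    rw [show 1 - ((b ^ 2 + a * (x - a)) / (b * x)) ^ 2
        = (a ^ 2 - b ^ 2) * (b ^ 2 - (x - a) ^ 2) / (b * x) ^ 2 by field_simp; ring,
      sqrt_div (by positivity), sqrt_sq hbx.le, sqrt_mul hc.le]
  have hquot := ((hasDerivAt_id x).sub_const a).const_mul a |>.const_add (b ^ 2)
    |>.div ((hasDerivAt_id x).const_mul b) hbx.ne'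
  refine ((hasDerivAt_arcsin hgt.ne' hlt.ne).comp x hquot
    |>.const_mul (√(a ^ 2 - b ^ 2))).congr_deriv ?_
  have hc' := sqrt_pos.2 hc
  have hS := sqrt_pos.2 hpos
  simp only [id, hsqrt]
  field_simp
  ring

/-- For `b = a` the factor `√(a² - b²) = 0` kills the last term, whose arcsin argument is
the junk value `0 / 0` at the endpoint `x = a - b = 0`. -/
noncomputable def semicircleDivAntideriv (a b x : ℝ) : ℝ :=
  (√(b ^ 2 - (x - a) ^ 2) + a * arcsin ((x - a) / b)
    - √(a ^ 2 - b ^ 2) * arcsin ((b ^ 2 + a * (x - a)) / (b * x))) / (2 * π)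

lemma continuousOn_semicircleDivAntideriv (hb : 0 < b) (hba : b ≤ a) :
    ContinuousOn (semicircleDivAntideriv a b) (Icc (a - b) (a + b)) := by
  refine ContinuousOn.div_const (ContinuousOn.sub (by fun_prop) ?_) _
  rcases hba.lt_or_eq with hba | rfl
  · refine continuousOn_const.mul (continuous_arcsin.comp_continuousOn ?_)
    refine ContinuousOn.div (by fun_prop) (by fun_prop) fun y hy => ?_
    have : 0 < y := by linarith [hy.1]
    positivity
  · simpa using continuousOn_const

lemma hasDerivAt_semicircleDivAntideriv (hb : 0 < b) (hba : b ≤ a)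
    (hx : x ∈ Ioo (a - b) (a + b)) :
    HasDerivAt (semicircleDivAntideriv a b) (√(b ^ 2 - (x - a) ^ 2) / (2 * π * x)) x := by
  refine (((hasDerivAt_sqrt_add_mul_arcsin hb hx).sub
    (hasDerivAt_sqrt_mul_arcsin hb hba hx)).div_const (2 * π)).congr_deriv ?_
  obtain ⟨hx₁, hx₂⟩ := hx
  have hx₀ : 0 < x := by linarith
  have hpos : 0 < b ^ 2 - (x - a) ^ 2 := by nlinarith
  have hS := sqrt_pos.2 hpos
  have hS2 := sq_sqrt hpos.le
  field_simp
  linear_combination -hS2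

lemma semicircleDivAntideriv_right (hb : 0 < b) (hba : b ≤ a) :
    semicircleDivAntideriv a b (a + b) = (a - √(a ^ 2 - b ^ 2)) / 4 := by
  have : (b ^ 2 + a * (a + b - a)) / (b * (a + b)) = 1 := by
    rw [div_eq_one_iff_eq (by nlinarith)]; ring
  rw [semicircleDivAntideriv, this, add_sub_cancel_left, div_self hb.ne', sub_self, arcsin_one]
  field_simp
  simp
  ring

lemma semicircleDivAntideriv_left (hb : 0 < b) (hba : b ≤ a) :
    semicircleDivAntideriv a b (a - b) = -(a - √(a ^ 2 - b ^ 2)) / 4 := by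
  have hc : √(a ^ 2 - b ^ 2) * arcsin ((b ^ 2 + a * (a - b - a)) / (b * (a - b)))
      = -(√(a ^ 2 - b ^ 2) * (π / 2)) := by
    rcases hba.lt_or_eq with hba | rfl
    · rw [show (b ^ 2 + a * (a - b - a)) / (b * (a - b)) = -1 by
        rw [div_eq_iff (by nlinarith)]; ring, arcsin_neg_one]
      ring
    · simp
  simp only [semicircleDivAntideriv, hc]
  rw [show a - b - a = -b by ring, neg_div, div_self hb.ne', arcsin_neg_one]
  field_simp
  simp
  ring

theorem integral_sqrt_sq_sub_sq_div (hb : 0 < b) (hba : b ≤ a) :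
    ∫ x in (a - b)..(a + b), √(b ^ 2 - (x - a) ^ 2) / (2 * π * x)
      = (a - √(a ^ 2 - b ^ 2)) / 2 := by
  have hle : a - b ≤ a + b := by linarith
  have hderiv := fun x hx => hasDerivAt_semicircleDivAntideriv (a := a) (x := x) hb hba hx
  have hcont := continuousOn_semicircleDivAntideriv hb hba
  have hnonneg : ∀ x ∈ Ioo (a - b) (a + b), 0 ≤ √(b ^ 2 - (x - a) ^ 2) / (2 * π * x) :=
    fun x hx => div_nonneg (sqrt_nonneg _) (mul_pos two_pi_pos (by linarith [hx.1])).le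
  rw [integral_eq_sub_of_hasDeriv_right_of_le hle hcont
    (fun x hx => (hderiv x hx).hasDerivWithinAt)
    ((intervalIntegrable_iff_integrableOn_Ioc_of_le hle).2
      (integrableOn_deriv_of_nonneg hcont hderiv hnonneg)),
    semicircleDivAntideriv_right hb hba, semicircleDivAntideriv_left hb hba]
  ring

end SemicircleDivX

/-- For every real `l > 0`,
`∫_{(1−√l)²}^{(1+√l)²} √(4l − (x−1−l)²)/(2πx) dx = min(1, l)`. -/
theorem stmt11 (l : ℝ) (hl : 0 < l) :
    ∫ x in ((1 - Real.sqrt l) ^ 2)..((1 + Real.sqrt l) ^ 2),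
      Real.sqrt (4 * l - (x - 1 - l) ^ 2) / (2 * π * x) = min 1 l := by
  have hsq : √l ^ 2 = l := sq_sqrt hl.le
  have hb : 0 < 2 * √l := by positivity
  have hba : 2 * √l ≤ 1 + l := by nlinarith [sq_nonneg (1 - √l)]
  have hlo : (1 - √l) ^ 2 = 1 + l - 2 * √l := by linear_combination hsq
  have hhi : (1 + √l) ^ 2 = 1 + l + 2 * √l := by linear_combination hsq
  have hrad (x : ℝ) : 4 * l - (x - 1 - l) ^ 2 = (2 * √l) ^ 2 - (x - (1 + l)) ^ 2 := by
    linear_combination -4 * hsq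
  have hdisc : (1 + l) ^ 2 - (2 * √l) ^ 2 = (1 - l) ^ 2 := by linear_combination -4 * hsq
  simp_rw [hlo, hhi, hrad]
  rw [integral_sqrt_sq_sub_sq_div hb hba, hdisc, sqrt_sq_eq_abs, abs_sub_comm,
    show min (1 : ℝ) l = _ from inf_eq_half_smul_add_sub_abs_sub' ℝ 1 l, smul_eq_mul]
  ring
end

section
/- Let t > 0 and let g : ℝ → ℝ be a continuous, strictly decreasing function whose range is the interval (−t, 0), with inverse g^{(−1)} : (−t,0) → ℝ. Suppose that the improper integrals ∫_{−∞}^0 (−g(v)) dv and ∫₀^{∞} (t + g(v)) dv are both finite. Then the improper integral ∫_{−t}^0 g^{(−1)}(x) dx converges absolutely, and lim_{A→∞} [ −t·A − ∫_{−∞}^A g(v) dv ] = −∫_{−t}^0 g^{(−1)}(x) dx. -/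
/-!
Layer cake: since `ginv` is decreasing with `g` as inverse, for `v > 0` the set of `x ∈ (-t, 0)`
with `ginv x > v` is `(-t, g v)`, and for `v < 0` the set with `ginv x < v` is `(g v, 0)`.
Hence `∫ ginv⁺ = ∫₀^∞ (t + g)` and `∫ ginv⁻ = ∫_{-∞}^0 (-g)`, so `ginv` is integrable with
`∫ ginv = ∫₀^∞ (t + g) - ∫_{-∞}^0 (-g)`, while `-t A - ∫_{-∞}^A g = ∫_{-∞}^0 (-g) - ∫₀^A (t + g)`.
-/

open MeasureTheory Filter Set Topology

section LayerCake

variable {α : Type*} [MeasurableSpace α] {μ : Measure α} {f : α → ℝ}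

theorem lintegral_ofReal_eq_lintegral_meas_lt (hf : AEMeasurable f μ) :
    ∫⁻ x, ENNReal.ofReal (f x) ∂μ = ∫⁻ v in Ioi 0, μ {x | v < f x} := by
  have hmax : ∀ x, ENNReal.ofReal (f x) = ENNReal.ofReal (max (f x) 0) := fun x => by simp
  simp_rw [hmax]
  rw [lintegral_eq_lintegral_meas_lt (f := fun x => max (f x) 0) μ
    (.of_forall fun x => le_max_right _ _) (hf.max aemeasurable_const)]
  refine setLIntegral_congr_fun measurableSet_Ioi fun v (hv : 0 < v) => ?_
  simp only [lt_max_iff, hv.not_gt, or_false]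

theorem integrable_of_lintegral_ofReal_lt_top (hf : AEStronglyMeasurable f μ)
    (hpos : ∫⁻ x, ENNReal.ofReal (f x) ∂μ < ⊤) (hneg : ∫⁻ x, ENNReal.ofReal (-f x) ∂μ < ⊤) :
    Integrable f μ := by
  refine ⟨hf, ?_⟩
  calc ∫⁻ x, ‖f x‖ₑ ∂μ
      ≤ ∫⁻ x, (ENNReal.ofReal (f x) + ENNReal.ofReal (-f x)) ∂μ := by
        refine lintegral_mono fun x => ?_
        rw [Real.enorm_eq_ofReal_abs, abs_eq_max_neg, ENNReal.ofReal_max]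
        exact max_le le_self_add le_add_self
    _ = ∫⁻ x, ENNReal.ofReal (f x) ∂μ + ∫⁻ x, ENNReal.ofReal (-f x) ∂μ :=
        lintegral_add_left' hf.aemeasurable.ennreal_ofReal _
    _ < ⊤ := ENNReal.add_lt_top.mpr ⟨hpos, hneg⟩

end LayerCake

section RightInverse

variable {a b : ℝ} {g ginv : ℝ → ℝ}
  (hga : StrictAnti g) (hg : ∀ v, g v ∈ Ioo a b) (hinv : RightInvOn ginv g (Ioo a b))
include hga hinv

theorem antitoneOn_of_rightInvOn : AntitoneOn ginv (Ioo a b) := fun x hx y hy hxy => by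
  rw [← hga.le_iff_ge, hinv hx, hinv hy]; exact hxy

include hg

theorem Ioo_inter_setOf_lt_rightInv (v : ℝ) :
    Ioo a b ∩ {x | v < ginv x} = Ioo a (g v) := by
  ext x
  refine ⟨fun ⟨hx, hvx⟩ => ⟨hx.1, ?_⟩, fun hx => ⟨⟨hx.1, hx.2.trans (hg v).2⟩, ?_⟩⟩
  · simpa only [hinv hx] using hga hvx
  · rw [mem_ofPred_eq, ← hga.lt_iff_gt, hinv ⟨hx.1, hx.2.trans (hg v).2⟩]; exact hx.2

theorem Ioo_inter_setOf_rightInv_lt (v : ℝ) :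
    Ioo a b ∩ {x | ginv x < v} = Ioo (g v) b := by
  ext x
  refine ⟨fun ⟨hx, hvx⟩ => ⟨?_, hx.2⟩, fun hx => ⟨⟨(hg v).1.trans hx.1, hx.2⟩, ?_⟩⟩
  · simpa only [hinv hx] using hga hvx
  · rw [mem_ofPred_eq, ← hga.lt_iff_gt, hinv ⟨(hg v).1.trans hx.1, hx.2⟩]; exact hx.1

theorem lintegral_ofReal_rightInv :
    ∫⁻ x in Ioo a b, ENNReal.ofReal (ginv x) = ∫⁻ v in Ioi 0, ENNReal.ofReal (g v - a) := by
  rw [lintegral_ofReal_eq_lintegral_meas_lt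
    (aemeasurable_restrict_of_antitoneOn measurableSet_Ioo (antitoneOn_of_rightInvOn hga hinv))]
  refine setLIntegral_congr_fun measurableSet_Ioi fun v _ => ?_
  rw [Measure.restrict_apply' measurableSet_Ioo, inter_comm,
    Ioo_inter_setOf_lt_rightInv hga hg hinv, Real.volume_Ioo]

theorem lintegral_ofReal_neg_rightInv :
    ∫⁻ x in Ioo a b, ENNReal.ofReal (-ginv x) = ∫⁻ v in Iio 0, ENNReal.ofReal (b - g v) := by
  rw [lintegral_ofReal_eq_lintegral_meas_lt (f := fun x => -ginv x)
    (aemeasurable_restrict_of_antitoneOn measurableSet_Ioo (antitoneOn_of_rightInvOn hga hinv)).neg]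
  rw [← (Measure.measurePreserving_neg volume).setLIntegral_comp_preimage_emb
    measurableEmbedding_neg (fun v => ENNReal.ofReal (b - g v)) (Iio 0)]
  simp only [neg_preimage, neg_Iio, neg_zero]
  refine setLIntegral_congr_fun measurableSet_Ioi fun v _ => ?_
  simp only [lt_neg]
  rw [Measure.restrict_apply' measurableSet_Ioo, inter_comm,
    Ioo_inter_setOf_rightInv_lt hga hg hinv, Real.volume_Ioo]

theorem integrableOn_rightInv (hpos : IntegrableOn (fun v => g v - a) (Ioi 0))
    (hneg : IntegrableOn (fun v => b - g v) (Iio 0)) : IntegrableOn ginv (Ioo a b) :=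
  integrable_of_lintegral_ofReal_lt_top
    (aemeasurable_restrict_of_antitoneOn measurableSet_Ioo
      (antitoneOn_of_rightInvOn hga hinv)).aestronglyMeasurable
    (by rw [lintegral_ofReal_rightInv hga hg hinv]; exact hpos.lintegral_lt_top)
    (by rw [lintegral_ofReal_neg_rightInv hga hg hinv]; exact hneg.lintegral_lt_top)

theorem setIntegral_rightInv (hint : IntegrableOn ginv (Ioo a b)) :
    ∫ x in Ioo a b, ginv x = (∫ v in Ioi 0, (g v - a)) - ∫ v in Iio 0, (b - g v) := by
  rw [integral_eq_lintegral_pos_part_sub_lintegral_neg_part hint,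
    lintegral_ofReal_rightInv hga hg hinv, lintegral_ofReal_neg_rightInv hga hg hinv,
    integral_eq_lintegral_of_nonneg_ae (.of_forall fun v => sub_nonneg.2 (hg v).1.le)
      (hga.antitone.measurable.sub_const a).aestronglyMeasurable,
    integral_eq_lintegral_of_nonneg_ae (.of_forall fun v => sub_nonneg.2 (hg v).2.le)
      (hga.antitone.measurable.const_sub b).aestronglyMeasurable]

end RightInverse

theorem tendsto_neg_mul_sub_setIntegral_Iic {g : ℝ → ℝ} (c : ℝ) (hneg : IntegrableOn g (Iic 0))
    (hpos : IntegrableOn (fun v => c + g v) (Ioi 0)) :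
    Tendsto (fun A => -c * A - ∫ v in Iic A, g v) atTop
      (𝓝 (-(∫ v in Iic 0, g v) - ∫ v in Ioi 0, (c + g v))) := by
  refine ((intervalIntegral_tendsto_integral_Ioi 0 hpos tendsto_id).const_sub
    (-∫ v in Iic 0, g v)).congr' ?_
  filter_upwards [eventually_ge_atTop 0] with A hA
  have hc : IntegrableOn (fun _ => c) (Ioc 0 A) := integrableOn_const measure_Ioc_lt_top.ne
  have hgA : IntegrableOn g (Ioc 0 A) := by
    simpa [Pi.sub_def] using (hpos.mono_set Ioc_subset_Ioi_self).sub hc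
  rw [id, intervalIntegral.integral_of_le hA, integral_add hc hgA, setIntegral_const,
    ← Iic_union_Ioc_eq_Iic hA,
    setIntegral_union (Iic_disjoint_Ioc le_rfl) measurableSet_Ioc hneg hgA]
  simp only [Real.volume_real_Ioc, sub_zero, hA, sup_of_le_left, smul_eq_mul, neg_mul]
  ring

theorem stmt14_general (t : ℝ) (g ginv : ℝ → ℝ)
    (hga : StrictAnti g)
    (hgrange : Set.range g = Set.Ioo (-t) 0)
    (hinv_right : ∀ x ∈ Set.Ioo (-t) 0, g (ginv x) = x)
    (hint_neg : IntegrableOn (fun v : ℝ => -g v) (Set.Iic 0))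
    (hint_pos : IntegrableOn (fun v : ℝ => t + g v) (Set.Ici 0)) :
    IntegrableOn ginv (Set.Ioo (-t) 0) ∧
    Tendsto (fun A : ℝ => -t * A - ∫ v in Set.Iic A, g v) atTop
      (nhds (-∫ x in Set.Ioo (-t) 0, ginv x)) := by
  have hg : ∀ v, g v ∈ Ioo (-t) 0 := fun v => hgrange ▸ mem_range_self v
  have hpos : IntegrableOn (fun v => g v - -t) (Ioi 0) := by
    simpa only [sub_neg_eq_add, add_comm] using hint_pos.mono_set Ioi_subset_Ici_self
  have hneg : IntegrableOn (fun v => 0 - g v) (Iio 0) := by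
    simpa only [zero_sub] using hint_neg.mono_set Iio_subset_Iic_self
  have hint := integrableOn_rightInv hga hg hinv_right hpos hneg
  refine ⟨hint, ?_⟩
  convert tendsto_neg_mul_sub_setIntegral_Iic t (by simpa using hint_neg.neg)
    (hint_pos.mono_set Ioi_subset_Ici_self) using 2
  rw [setIntegral_rightInv hga hg hinv_right hint, integral_Iic_eq_integral_Iio]
  simp only [sub_neg_eq_add, zero_sub, integral_neg, add_comm (g _)]
  ring

/-- Let `t > 0` and let `g : ℝ → ℝ` be a continuous, strictly decreasing function whose
range is the interval `(−t, 0)`, with inverse `ginv : (−t,0) → ℝ`.  Suppose that the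
improper integrals `∫_{−∞}^0 (−g(v)) dv` and `∫₀^∞ (t + g(v)) dv` are both finite.  Then
the improper integral `∫_{−t}^0 ginv(x) dx` converges absolutely, and
`lim_{A→∞} [ −t·A − ∫_{−∞}^A g(v) dv ] = −∫_{−t}^0 ginv(x) dx`. -/
theorem stmt14 (t : ℝ) (ht : 0 < t) (g ginv : ℝ → ℝ)
    (hgc : Continuous g) (hga : StrictAnti g)
    (hgrange : Set.range g = Set.Ioo (-t) 0)
    (hinv_left : ∀ v : ℝ, ginv (g v) = v)
    (hinv_right : ∀ x ∈ Set.Ioo (-t) 0, g (ginv x) = x)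
    (hint_neg : IntegrableOn (fun v : ℝ => -g v) (Set.Iic 0))
    (hint_pos : IntegrableOn (fun v : ℝ => t + g v) (Set.Ici 0)) :
    IntegrableOn ginv (Set.Ioo (-t) 0) ∧
    Tendsto (fun A : ℝ => -t * A - ∫ v in Set.Iic A, g v) atTop
      (nhds (-∫ x in Set.Ioo (-t) 0, ginv x)) :=
  stmt14_general t g ginv hga hgrange hinv_right hint_neg hint_pos
end
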